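/- arXiv:2411.16309 — 5 statements merged into one kernel-verified Lean document; each statement's English description precedes it below -/
import Mathlib

section
/- Let A be a Boolean ring and x, y ∈ A. If x ≠ y in A, then there exists a ring homomorphism p : A → 𝔽₂ with p(x) ≠ p(y). Equivalently, the map A → Clop(Spec A), sending x to the set of prime ideals not containing x, is injective. -/
theorem stmt_4 {A : Type*} [CommRing A] (h : ∀ x : A, x * x = x)
    {x y : A} (hxy : x ≠ y) :
    (∃ p : A →+* ZMod 2, p x ≠ p y) ∧
      Function.Injective (fun a : A => {𝔭 : PrimeSpectrum A | a ∉ 𝔭.asIdeal}) := by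
  classical
  have h2 : (2 : A) = 0 := by linear_combination h 2
  have key : ∀ (p : Ideal A), p.IsPrime → ∀ a : A, a ∉ p → 1 - a ∈ p := by
    intro p hp a ha
    have hm : a * (1 - a) ∈ p := by
      have : a * (1 - a) = 0 := by linear_combination -h a
      rw [this]; exact p.zero_mem
    rcases hp.mem_or_mem hm with h1 | h1
    · exact absurd h1 ha
    · exact h1
  have hred : IsReduced A := by
    constructor
    intro a ⟨n, hn⟩
    have hpow : ∀ m : ℕ, a ^ (m + 1) = a := by
      intro m; induction m with
      | zero => simp
      | succ k ih => rw [pow_succ, ih, h a]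
    cases n with
    | zero =>
      rw [pow_zero] at hn
      calc a = a * 1 := (mul_one a).symm
        _ = 0 := by rw [hn, mul_zero]
    | succ k => rw [hpow k] at hn; exact hn
  -- iff-membership implies sub membership
  have subm : ∀ (p : Ideal A), p.IsPrime → ∀ a b : A, (a ∈ p ↔ b ∈ p) → a - b ∈ p := by
    intro p hp a b hiff
    by_cases ha : a ∈ p
    · exact sub_mem ha (hiff.mp ha)
    · have hb : b ∉ p := fun hb => ha (hiff.mpr hb)
      have h1 := key p hp a ha
      have h2' := key p hp b hb
      have : a - b = (1 - b) - (1 - a) := by ring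
      rw [this]; exact sub_mem h2' h1
  have nil : nilradical A = ⊥ := by
    simpa using (nilradical_eq_zero A)
  constructor
  · -- existence of separating hom
    have hxy0 : x - y ≠ 0 := sub_ne_zero.mpr hxy
    have : x - y ∉ nilradical A := by rw [nil]; simpa using hxy0
    rw [nilradical_eq_sInf, Ideal.mem_sInf] at this
    push_neg at this
    obtain ⟨P, hP, hxP⟩ := this
    have hP : P.IsPrime := hP
    -- not (x ∈ P ↔ y ∈ P)
    have hne : ¬ (x ∈ P ↔ y ∈ P) := fun hiff => hxP (subm P hP x y hiff)
    refine ⟨{ toFun := fun a => if a ∈ P then 0 else 1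
              map_one' := by simp [(Ideal.ne_top_iff_one P).mp hP.ne_top]
              map_mul' := ?_
              map_zero' := by simp [P.zero_mem]
              map_add' := ?_ }, ?_⟩
    · intro a b
      by_cases ha : a ∈ P
      · have : a * b ∈ P := Ideal.mul_mem_right _ _ ha
        simp [ha, this]
      · by_cases hb : b ∈ P
        · have : a * b ∈ P := Ideal.mul_mem_left _ _ hb
          simp [ha, hb, this]
        · have : a * b ∉ P := fun hab => (hP.mem_or_mem hab).elim ha hb
          simp [ha, hb, this]
    · intro a b
      by_cases ha : a ∈ P
      · by_cases hb : b ∈ P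
        · have : a + b ∈ P := add_mem ha hb
          simp [ha, hb, this]
        · have : a + b ∉ P := fun hab => hb (by simpa using sub_mem hab ha)
          simp [ha, hb, this]
      · by_cases hb : b ∈ P
        · have : a + b ∉ P := fun hab => ha (by simpa using sub_mem hab hb)
          simp [ha, hb, this]
        · have h1 := key P hP a ha
          have h1' := key P hP b hb
          have : a + b ∈ P := by
            have hs : (1 - a) + (1 - b) ∈ P := add_mem h1 h1'
            have : (1 - a) + (1 - b) = a + b := by linear_combination (1 - a - b) * h2
            rwa [this] at hs
          simp [ha, hb, this]
          decide
    · simp only [RingHom.coe_mk, MonoidHom.coe_mk, OneHom.coe_mk]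
      by_cases hx : x ∈ P
      · have hy : y ∉ P := fun hy => hne ⟨fun _ => hy, fun _ => hx⟩
        simp [hx, hy]
      · have hy : y ∈ P := by
          by_contra hy
          exact hne ⟨fun hx' => absurd hx' hx, fun hy' => absurd hy' hy⟩
        simp [hx, hy]
  · intro a b hab
    have hiff : ∀ 𝔭 : PrimeSpectrum A, a ∈ 𝔭.asIdeal ↔ b ∈ 𝔭.asIdeal := by
      intro 𝔭
      have := Set.ext_iff.mp hab 𝔭
      simp only [Set.mem_setOf_eq] at this
      tauto
    have : a - b ∈ nilradical A := by
      rw [nilradical_eq_sInf, Ideal.mem_sInf]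
      intro P hP
      exact subm P hP a b (hiff ⟨P, hP⟩)
    rw [nil] at this
    have : a - b = 0 := by simpa using this
    exact sub_eq_zero.mp this
end

section
/- For a Boolean ring A, the Stone-duality unit map A → Clop(Spec A), sending x to {𝔭 ∈ Spec A : x ∉ 𝔭}, is a well-defined map into clopen sets and is a bijection onto the clopen subsets of Spec A. -/
theorem stmt_5 {A : Type*} [CommRing A] (h : ∀ x : A, x * x = x) :
    (∀ x : A, IsClopen {𝔭 : PrimeSpectrum A | x ∉ 𝔭.asIdeal}) ∧
    Function.Injective (fun x : A => {𝔭 : PrimeSpectrum A | x ∉ 𝔭.asIdeal}) ∧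
    (∀ s : Set (PrimeSpectrum A), IsClopen s →
      ∃ x : A, {𝔭 : PrimeSpectrum A | x ∉ 𝔭.asIdeal} = s) := by
  have key : ∀ x : A, ({𝔭 : PrimeSpectrum A | x ∉ 𝔭.asIdeal} : Set (PrimeSpectrum A))
      = (PrimeSpectrum.basicOpen x : Set (PrimeSpectrum A)) := fun _ => rfl
  have clopen : ∀ x : A, IsClopen {𝔭 : PrimeSpectrum A | x ∉ 𝔭.asIdeal} := by
    intro x
    rw [key]
    exact PrimeSpectrum.isClopen_iff.mpr ⟨x, h x, rfl⟩
  refine ⟨clopen, ?_, ?_⟩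
  · intro x y hxy
    simp only at hxy
    have hu := PrimeSpectrum.existsUnique_idempotent_basicOpen_eq_of_isClopen (clopen x)
    obtain ⟨e, _, he⟩ := hu
    have h1 := he x ⟨h x, (key x).symm⟩
    have h2 := he y ⟨h y, by rw [hxy]; exact (key y).symm⟩
    rw [h1, h2]
  · intro s hs
    obtain ⟨e, _, he⟩ := PrimeSpectrum.exists_idempotent_basicOpen_eq_of_isClopen hs
    exact ⟨e, by rw [key, ← he]⟩
end

section
/- Let A be an abelian category in which every short exact sequence splits (i.e., A is semisimple as an exact category). Suppose C and D are full subcategories closed under direct summands with C ∩ D = 0 (the only object in both is the zero object), and such that every object X of A admits a direct sum decomposition X ≅ C ⊕ D with C ∈ C and D ∈ D. Then Hom(C, D) = 0 for every C ∈ C and D ∈ D. -/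
open CategoryTheory Limits

theorem stmt_11 {A : Type*} [Category A] [Abelian A]
    (hsplit : ∀ (X Y : A) (f : X ⟶ Y), Epi f → ∃ g : Y ⟶ X, g ≫ f = 𝟙 Y)
    (C D : Set A)
    (hCiso : ∀ X Y : A, (X ≅ Y) → X ∈ C → Y ∈ C)
    (hDiso : ∀ X Y : A, (X ≅ Y) → X ∈ D → Y ∈ D)
    (hCsum : ∀ X Y : A, (X ⊞ Y) ∈ C → X ∈ C)
    (hDsum : ∀ X Y : A, (X ⊞ Y) ∈ D → X ∈ D)
    (hCD : ∀ X : A, X ∈ C → X ∈ D → IsZero X)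
    (hdec : ∀ X : A, ∃ c ∈ C, ∃ d ∈ D, Nonempty (X ≅ c ⊞ d)) :
    ∀ c ∈ C, ∀ d ∈ D, ∀ f : c ⟶ d, f = 0 := by
  intro c hc d hd f
  obtain ⟨s, hs⟩ := hsplit c (image f) (factorThruImage f) inferInstance
  haveI : IsSplitEpi (factorThruImage f) := ⟨⟨⟨s, hs⟩⟩⟩
  have iso1 : c ≅ kernel (factorThruImage f) ⊞ image f :=
    biprod.uniqueUpToIso _ _ (isBilimitBinaryBiconeOfIsSplitEpiOfKernel
      (kernelIsKernel (factorThruImage f)))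
  have hIC : image f ∈ C :=
    hCsum _ _ (hCiso _ _ (biprod.braiding _ _) (hCiso _ _ iso1 hc))
  obtain ⟨r, hr⟩ := hsplit d (cokernel (image.ι f)) (cokernel.π _) inferInstance
  haveI : IsSplitEpi (cokernel.π (image.ι f)) := ⟨⟨⟨r, hr⟩⟩⟩
  haveI : IsSplitEpi (CokernelCofork.ofπ (cokernel.π (image.ι f))
      (cokernel.condition (image.ι f))).π := ⟨⟨⟨r, by simpa using hr⟩⟩⟩
  have lim := Abelian.monoIsKernelOfCokernel _ (cokernelIsCokernel (image.ι f))
  have iso2 : d ≅ image f ⊞ cokernel (image.ι f) :=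
    biprod.uniqueUpToIso _ _ (isBilimitBinaryBiconeOfIsSplitEpiOfKernel lim)
  have hID : image f ∈ D := hDsum _ _ (hDiso _ _ iso2 hd)
  have hz := hCD _ hIC hID
  rw [← image.fac f, hz.eq_of_src (image.ι f) 0, comp_zero]
end

section
/- Let A be a complete Boolean algebra in which there exists x ≰ y. Then there exists a lattice homomorphism p : A → Bool preserving finite meets, finite joins, ⊥ and ⊤, such that p(x) = true and p(y) = false. -/
theorem stmt_12 {A : Type*} [CompleteBooleanAlgebra A] {x y : A} (hxy : ¬ x ≤ y) :
    ∃ p : A → Bool,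
      p ⊥ = ⊥ ∧ p ⊤ = ⊤ ∧
      (∀ a b : A, p (a ⊓ b) = p a ⊓ p b) ∧
      (∀ a b : A, p (a ⊔ b) = p a ⊔ p b) ∧
      p x = true ∧ p y = false := by
  classical
  have hdisj : Disjoint ((Order.PFilter.principal x : Order.PFilter A) : Set A)
      ((Order.Ideal.principal y : Order.Ideal A) : Set A) := by
    rw [Set.disjoint_left]
    intro z hz hz'
    exact hxy (le_trans (Order.PFilter.mem_principal.mp hz)
      (Order.Ideal.mem_principal.mp hz'))
  obtain ⟨J, hJprime, hIJ, hFJ⟩ := DistribLattice.prime_ideal_of_disjoint_filter_ideal hdisj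
  have hyJ : y ∈ J := hIJ (Order.Ideal.mem_principal.mpr le_rfl)
  have hxJ : x ∉ J := Set.disjoint_left.mp hFJ (Order.PFilter.mem_principal.mpr le_rfl)
  refine ⟨fun a => decide (a ∉ J), ?_, ?_, ?_, ?_, ?_, ?_⟩
  · simp [J.bot_mem]
  · have : (⊤ : A) ∉ J := fun h => hxJ (J.lower le_top h)
    simp [this]
  · intro a b
    have : a ⊓ b ∈ J ↔ a ∈ J ∨ b ∈ J :=
      ⟨hJprime.mem_or_mem, fun h => h.elim (fun h => J.lower inf_le_left h)
        (fun h => J.lower inf_le_right h)⟩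
    by_cases ha : a ∈ J <;> by_cases hb : b ∈ J <;> simp [ha, hb, this]
  · intro a b
    have : a ⊔ b ∈ J ↔ a ∈ J ∧ b ∈ J :=
      ⟨fun h => ⟨J.lower le_sup_left h, J.lower le_sup_right h⟩,
        fun h => Order.Ideal.sup_mem h.1 h.2⟩
    by_cases ha : a ∈ J <;> by_cases hb : b ∈ J <;> simp [ha, hb, this]
  · simp [hxJ]
  · simp [hyJ]
end

section
/- Let A be a Boolean ring (viewed as a Boolean algebra) and T a topological space. There is a natural bijection between Boolean algebra homomorphisms A → Clop(T) and continuous maps T → Spec(A), sending φ : A → Clop(T) to the map p ↦ {x ∈ A : p ∉ φ(x)}. -/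
open TopologicalSpace

namespace Stmt15Aux

variable {A : Type*} [BooleanRing A] {T : Type*} [TopologicalSpace T]

theorem mem_iff_one_add (p : PrimeSpectrum A) (x : A) :
    x ∈ p.asIdeal ↔ (1 + x) ∉ p.asIdeal := by
  constructor
  · intro hx h1
    have hone : (1 : A) ∈ p.asIdeal := by
      have := p.asIdeal.add_mem hx h1
      rwa [show x + (1 + x) = 1 by
        rw [add_comm 1 x, ← add_assoc, BooleanRing.add_self, zero_add]] at this
    exact p.isPrime.ne_top (Ideal.eq_top_of_isUnit_mem _ hone isUnit_one)
  · intro h1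
    have h0 : x * (1 + x) = 0 := BooleanRing.mul_one_add_self x
    rcases p.isPrime.mem_or_mem (show x * (1 + x) ∈ p.asIdeal by rw [h0]; exact zero_mem _) with
      h | h
    · exact h
    · exact absurd h h1

theorem mul_absorb (a b : A) : a * (a + b + a * b) = a := by
  rw [mul_add, mul_add, BooleanRing.mul_self, ← mul_assoc, BooleanRing.mul_self, add_assoc,
    BooleanRing.add_self, add_zero]

theorem isClopen_basicOpen (x : A) :
    IsClopen (PrimeSpectrum.basicOpen x : Set (PrimeSpectrum A)) := by
  refine ⟨?_, (PrimeSpectrum.basicOpen x).isOpen⟩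
  rw [← isOpen_compl_iff]
  have : (PrimeSpectrum.basicOpen x : Set (PrimeSpectrum A))ᶜ =
      (PrimeSpectrum.basicOpen (1 + x) : Set (PrimeSpectrum A)) := by
    ext p
    rw [Set.mem_compl_iff, SetLike.mem_coe, SetLike.mem_coe, PrimeSpectrum.mem_basicOpen,
      PrimeSpectrum.mem_basicOpen, not_not, mem_iff_one_add]
  rw [this]
  exact (PrimeSpectrum.basicOpen (1 + x)).isOpen

/-- The ideal associated to a bounded lattice hom and a point. -/
def Fideal (φ : BoundedLatticeHom (AsBoolAlg A) (Clopens T)) (p : T) : Ideal A where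
  carrier := {x | p ∉ φ (toBoolAlg x)}
  zero_mem' := by
    intro h
    rw [toBoolAlg_zero, map_bot, ← SetLike.mem_coe, Clopens.coe_bot] at h
    exact h
  add_mem' := by
    intro a b ha hb
    simp only [Set.mem_setOf_eq] at *
    rw [toBoolAlg_add, map_symmDiff']
    intro h
    have hmem : p ∈ φ (toBoolAlg a) ⊔ φ (toBoolAlg b) :=
      SetLike.le_def.mp symmDiff_le_sup h
    rw [← SetLike.mem_coe, Clopens.coe_sup, Set.mem_union] at hmem
    exact hmem.elim ha hb
  smul_mem' := by
    intro c x hx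
    simp only [Set.mem_setOf_eq, smul_eq_mul] at *
    rw [toBoolAlg_mul, map_inf]
    intro h
    rw [← SetLike.mem_coe, Clopens.coe_inf, Set.mem_inter_iff] at h
    exact hx h.2

theorem mem_Fideal (φ : BoundedLatticeHom (AsBoolAlg A) (Clopens T)) (p : T) (x : A) :
    x ∈ Fideal φ p ↔ p ∉ φ (toBoolAlg x) := Iff.rfl

instance Fideal_isPrime (φ : BoundedLatticeHom (AsBoolAlg A) (Clopens T)) (p : T) :
    (Fideal φ p).IsPrime := by
  constructor
  · intro h
    have h1 : (1 : A) ∈ Fideal φ p := h ▸ Submodule.mem_top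
    rw [mem_Fideal, toBoolAlg_one, map_top] at h1
    exact h1 (by simp [← SetLike.mem_coe, Clopens.coe_top])
  · intro a b hab
    rw [mem_Fideal, toBoolAlg_mul, map_inf] at hab
    rw [mem_Fideal, mem_Fideal]
    by_contra h
    push_neg at h
    obtain ⟨ha, hb⟩ := h
    exact hab (by rw [← SetLike.mem_coe, Clopens.coe_inf]; exact ⟨ha, hb⟩)

/-- The forward map. -/
def Fmap (φ : BoundedLatticeHom (AsBoolAlg A) (Clopens T)) : C(T, PrimeSpectrum A) where
  toFun p := ⟨Fideal φ p, Fideal_isPrime φ p⟩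
  continuous_toFun := by
    rw [PrimeSpectrum.isTopologicalBasis_basic_opens.continuous_iff]
    rintro _ ⟨x, rfl⟩
    have : (fun p : T => (⟨Fideal φ p, Fideal_isPrime φ p⟩ : PrimeSpectrum A)) ⁻¹'
        (PrimeSpectrum.basicOpen x : Set (PrimeSpectrum A)) = (φ (toBoolAlg x) : Set T) := by
      ext p
      simp only [Set.mem_preimage, SetLike.mem_coe, PrimeSpectrum.mem_basicOpen, mem_Fideal,
        not_not]
    rw [this]
    exact (φ (toBoolAlg x)).isClopen.isOpen

/-- The inverse map. -/
def Gmap (f : C(T, PrimeSpectrum A)) : BoundedLatticeHom (AsBoolAlg A) (Clopens T) where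
  toFun x := ⟨f ⁻¹' (PrimeSpectrum.basicOpen (ofBoolAlg x) : Set (PrimeSpectrum A)),
    (isClopen_basicOpen (ofBoolAlg x)).preimage f.continuous⟩
  map_sup' a b := by
    refine Clopens.ext ?_
    rw [Clopens.coe_sup, Clopens.coe_mk, Clopens.coe_mk, Clopens.coe_mk]
    ext p
    simp only [Set.mem_preimage, SetLike.mem_coe, PrimeSpectrum.mem_basicOpen, Set.mem_union,
      ofBoolAlg_sup]
    constructor
    · intro h
      by_contra hc
      push_neg at hc
      exact h (add_mem (add_mem hc.1 hc.2) (Ideal.mul_mem_right _ _ hc.1))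
    · rintro (h | h) hmem
      · apply h
        have := Ideal.mul_mem_left (f p).asIdeal (ofBoolAlg a) hmem
        rwa [mul_absorb] at this
      · apply h
        have := Ideal.mul_mem_left (f p).asIdeal (ofBoolAlg b) hmem
        rw [show ofBoolAlg a + ofBoolAlg b + ofBoolAlg a * ofBoolAlg b =
            ofBoolAlg b + ofBoolAlg a + ofBoolAlg b * ofBoolAlg a by ring, mul_absorb] at this
        exact this
  map_inf' a b := by
    refine Clopens.ext ?_
    rw [Clopens.coe_inf, Clopens.coe_mk, Clopens.coe_mk, Clopens.coe_mk]
    ext p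
    simp only [Set.mem_preimage, SetLike.mem_coe, PrimeSpectrum.mem_basicOpen, Set.mem_inter_iff,
      ofBoolAlg_inf]
    constructor
    · intro h
      constructor
      · intro ha; exact h (Ideal.mul_mem_right _ _ ha)
      · intro hb; exact h (Ideal.mul_mem_left _ _ hb)
    · rintro ⟨ha, hb⟩ hmem
      rcases (f p).isPrime.mem_or_mem hmem with h | h
      · exact ha h
      · exact hb h
  map_top' := by
    refine Clopens.ext ?_
    rw [Clopens.coe_top, Clopens.coe_mk]
    ext p
    simp only [Set.mem_preimage, SetLike.mem_coe, PrimeSpectrum.mem_basicOpen, Set.mem_univ,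
      iff_true, ofBoolAlg_top]
    intro h
    exact (f p).isPrime.ne_top (Ideal.eq_top_of_isUnit_mem _ h isUnit_one)
  map_bot' := by
    refine Clopens.ext ?_
    rw [Clopens.coe_bot, Clopens.coe_mk]
    ext p
    simp [PrimeSpectrum.mem_basicOpen, ofBoolAlg_bot]

end Stmt15Aux

open Stmt15Aux in
theorem stmt_15 {A : Type*} [BooleanRing A] (T : Type*) [TopologicalSpace T] :
    ∃ F : BoundedLatticeHom (AsBoolAlg A) (Clopens T) → C(T, PrimeSpectrum A),
      Function.Bijective F ∧
      ∀ (φ : BoundedLatticeHom (AsBoolAlg A) (Clopens T)) (p : T) (x : A),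
        x ∈ (F φ p).asIdeal ↔ p ∉ φ (toBoolAlg x) := by
  refine ⟨Fmap, ?_, fun φ p x => Iff.rfl⟩
  rw [Function.bijective_iff_has_inverse]
  refine ⟨Gmap, ?_, ?_⟩
  · -- G ∘ F = id
    intro φ
    apply DFunLike.ext
    intro x
    refine Clopens.ext ?_
    ext p
    show Fmap φ p ∈ (PrimeSpectrum.basicOpen (ofBoolAlg x) : Set (PrimeSpectrum A)) ↔
      p ∈ (φ x : Set T)
    rw [SetLike.mem_coe, PrimeSpectrum.mem_basicOpen,
      show (Fmap φ p).asIdeal = Fideal φ p from rfl, mem_Fideal, toBoolAlg_ofBoolAlg, not_not,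
      SetLike.mem_coe]
  · intro f
    apply DFunLike.ext
    intro p
    apply PrimeSpectrum.ext
    apply Ideal.ext
    intro x
    show ¬ f p ∈ (PrimeSpectrum.basicOpen (ofBoolAlg (toBoolAlg x)) :
        Set (PrimeSpectrum A)) ↔ x ∈ (f p).asIdeal
    rw [SetLike.mem_coe, PrimeSpectrum.mem_basicOpen, ofBoolAlg_toBoolAlg, not_not]
end
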